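/- Let L be a nondegenerate quadratic form on ℝ^s and v, w ∈ Con_L with b_L(v,w) ≠ 0. Then the oriented distance between the horoballs Hb_v = {f_v ≤ 0} and Hb_w = {f_w ≤ 0} in 𝒫_s(L) equals 2√2 · ln |b_L(v,w)|. -/

import Mathlib

open Matrix

/-- `𝒫_s(L)`: minimal positive definite forms `Q` with `|L(x)| ≤ Q(x)` for all `x`. -/
def PsL {s : ℕ} (L : Matrix (Fin s) (Fin s) ℝ) : Set (Matrix (Fin s) (Fin s) ℝ) :=
  {Q | Q.PosDef ∧ (∀ x : Fin s → ℝ, |x ⬝ᵥ L.mulVec x| ≤ x ⬝ᵥ Q.mulVec x) ∧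
    ∀ Q' : Matrix (Fin s) (Fin s) ℝ, Q'.PosDef →
      (∀ x : Fin s → ℝ, |x ⬝ᵥ L.mulVec x| ≤ x ⬝ᵥ Q'.mulVec x) →
      (∀ x : Fin s → ℝ, x ⬝ᵥ Q'.mulVec x ≤ x ⬝ᵥ Q.mulVec x) → Q' = Q}

/-- Evaluation `Q(v)` of the quadratic form with matrix `Q` at `v`. -/
noncomputable def quadEval {s : ℕ} (Q : Matrix (Fin s) (Fin s) ℝ) (v : Fin s → ℝ) : ℝ :=
  v ⬝ᵥ Q.mulVec v

/-- The oriented distance `odist(Hb_v, Hb_w) = inf_{Q ∈ Hb_w} f_v(Q)` between the horoballs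
`Hb_v = {f_v ≤ 0}` and `Hb_w = {f_w ≤ 0}` in `𝒫_s(L)`, where `f_u(Q) = √2 ln Q(u)`. -/
noncomputable def odistHb {s : ℕ} (L : Matrix (Fin s) (Fin s) ℝ) (v w : Fin s → ℝ) : ℝ :=
  sInf ((fun Q => Real.sqrt 2 * Real.log (quadEval Q v)) ''
    {Q | Q ∈ PsL L ∧ Real.sqrt 2 * Real.log (quadEval Q w) ≤ 0})


section Helpers
variable {s : ℕ}

lemma myVecMulVec_mulVec (a b x : Fin s → ℝ) :
    vecMulVec a b *ᵥ x = (b ⬝ᵥ x) • a := by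
  ext i
  simp [vecMulVec_apply, mulVec, dotProduct, Finset.mul_sum, mul_comm, mul_left_comm]

lemma mySum_mulVec {ι : Type*} [Fintype ι] (M : ι → Matrix (Fin s) (Fin s) ℝ) (x : Fin s → ℝ) :
    (∑ i, M i) *ᵥ x = ∑ i, M i *ᵥ x := by
  ext j
  simp only [mulVec, dotProduct, Finset.sum_apply, Matrix.sum_apply, Finset.sum_mul]
  rw [Finset.sum_comm]

lemma myMulVec_sum {ι : Type*} [Fintype ι] (M : Matrix (Fin s) (Fin s) ℝ) (f : ι → (Fin s → ℝ)) :
    M *ᵥ (∑ i, f i) = ∑ i, M *ᵥ f i := by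
  ext j
  simp only [mulVec, dotProduct, Finset.sum_apply, Finset.mul_sum]
  rw [Finset.sum_comm]

lemma myDotProduct_sum {ι : Type*} [Fintype ι] (x : Fin s → ℝ) (f : ι → (Fin s → ℝ)) :
    x ⬝ᵥ (∑ i, f i) = ∑ i, x ⬝ᵥ f i := by
  simp only [dotProduct, Finset.sum_apply, Finset.mul_sum]
  rw [Finset.sum_comm]

lemma hsymm_dot (L : Matrix (Fin s) (Fin s) ℝ) (hL : L.IsSymm) (x y : Fin s → ℝ) :
    x ⬝ᵥ L *ᵥ y = y ⬝ᵥ L *ᵥ x := by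
  rw [dotProduct_mulVec, ← vecMul_transpose, hL.eq, dotProduct_comm]

lemma psd_mulVec_zero (A : Matrix (Fin s) (Fin s) ℝ) (hA : A.IsSymm)
    (hpsd : ∀ x, 0 ≤ x ⬝ᵥ A *ᵥ x) {x : Fin s → ℝ} (hx : x ⬝ᵥ A *ᵥ x = 0) :
    A *ᵥ x = 0 := by
  have key : ∀ y : Fin s → ℝ, y ⬝ᵥ A *ᵥ x = 0 := by
    intro y
    set c := y ⬝ᵥ A *ᵥ x with hc
    set d := y ⬝ᵥ A *ᵥ y with hd
    have hd0 : 0 ≤ d := hpsd y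
    have hxy : x ⬝ᵥ A *ᵥ y = c := by
      rw [hc, hsymm_dot A hA]
    have hd1 : (0:ℝ) < d + 1 := by linarith
    set t := -c / (d+1) with htdef
    have ht : t * (d+1) = -c := by
      rw [htdef]; field_simp
    have h := hpsd (x + t • y)
    have hexp : (x + t • y) ⬝ᵥ A *ᵥ (x + t • y) = t * c + t * c + t^2 * d := by
      rw [mulVec_add, mulVec_smul, dotProduct_add, add_dotProduct, add_dotProduct,
        dotProduct_smul, smul_dotProduct, smul_dotProduct, dotProduct_smul, hxy, ← hc, ← hd, hx,
        smul_eq_mul, smul_eq_mul, smul_eq_mul]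
      ring
    rw [hexp] at h
    have hc' : c = -(t * (d+1)) := by rw [ht]; ring
    have ht2 : t^2 = 0 := by
      refine le_antisymm ?_ (sq_nonneg t)
      rw [hc'] at h
      nlinarith [h, hd0, sq_nonneg t, mul_nonneg hd0 (sq_nonneg t)]
    have ht0 : t = 0 := sq_eq_zero_iff.mp ht2
    rw [hc', ht0]; ring
  ext j
  have := key (Pi.single j 1)
  simpa [single_dotProduct] using this

end Helpers

set_option maxHeartbeats 1000000 in
theorem exists_minimal {s : ℕ} (L : Matrix (Fin s) (Fin s) ℝ) (hL : L.IsSymm) (hLdet : L.det ≠ 0)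
    (v w : Fin s → ℝ) (hvCon : v ⬝ᵥ L.mulVec v = 0) (hwCon : w ⬝ᵥ L.mulVec w = 0)
    (hbl : v ⬝ᵥ L.mulVec w ≠ 0) :
    ∃ Q : Matrix (Fin s) (Fin s) ℝ,
      (Q.PosDef ∧ (∀ x : Fin s → ℝ, |x ⬝ᵥ L.mulVec x| ≤ x ⬝ᵥ Q.mulVec x) ∧
        ∀ Q' : Matrix (Fin s) (Fin s) ℝ, Q'.PosDef →
          (∀ x : Fin s → ℝ, |x ⬝ᵥ L.mulVec x| ≤ x ⬝ᵥ Q'.mulVec x) →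
          (∀ x : Fin s → ℝ, x ⬝ᵥ Q'.mulVec x ≤ x ⬝ᵥ Q.mulVec x) → Q' = Q) ∧
      w ⬝ᵥ Q.mulVec w = 1 ∧ v ⬝ᵥ Q.mulVec v = (v ⬝ᵥ L.mulVec w)^2 := by
  set b := v ⬝ᵥ L *ᵥ w with hb
  set Lv := L *ᵥ v with hLvdef
  set Lw := L *ᵥ w with hLwdef
  -- basic pairings
  have hvLv : Lv ⬝ᵥ v = 0 := by rw [dotProduct_comm]; exact hvCon
  have hwLw : Lw ⬝ᵥ w = 0 := by rw [dotProduct_comm]; exact hwCon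
  have hvLw : Lw ⬝ᵥ v = b := by rw [dotProduct_comm]
  have hwLv : Lv ⬝ᵥ w = b := by
    rw [dotProduct_comm, hLvdef, hsymm_dot L hL]
  have hLvx : ∀ x, v ⬝ᵥ L *ᵥ x = Lv ⬝ᵥ x := by
    intro x; rw [hsymm_dot L hL, dotProduct_comm, hLvdef]
  have hLwx : ∀ x, w ⬝ᵥ L *ᵥ x = Lw ⬝ᵥ x := by
    intro x; rw [hsymm_dot L hL, dotProduct_comm, hLwdef]
  -- the projection complement N
  set N : Matrix (Fin s) (Fin s) ℝ :=
    (1 : Matrix (Fin s) (Fin s) ℝ) - b⁻¹ • (vecMulVec v Lw + vecMulVec w Lv) with hNdef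
  have hN : ∀ x, N *ᵥ x = x - ((b⁻¹ * (Lw ⬝ᵥ x)) • v + (b⁻¹ * (Lv ⬝ᵥ x)) • w) := by
    intro x
    rw [hNdef, sub_mulVec, one_mulVec, smul_mulVec, add_mulVec,
      myVecMulVec_mulVec, myVecMulVec_mulVec, smul_add, smul_smul, smul_smul]
  have hNv : N *ᵥ v = 0 := by
    rw [hN, hvLv, hvLw, mul_zero, zero_smul, add_zero, mul_comm, mul_inv_cancel₀ hbl, one_smul,
      sub_self]
  have hNw : N *ᵥ w = 0 := by
    rw [hN, hwLw, hwLv, mul_zero, zero_smul, zero_add, mul_comm, mul_inv_cancel₀ hbl, one_smul,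
      sub_self]
  have hNorthv : ∀ x, Lv ⬝ᵥ (N *ᵥ x) = 0 := by
    intro x
    rw [hN, dotProduct_sub, dotProduct_add, dotProduct_smul, dotProduct_smul, hvLv, hwLv,
      smul_eq_mul, smul_eq_mul]
    field_simp
    ring
  have hNorthw : ∀ x, Lw ⬝ᵥ (N *ᵥ x) = 0 := by
    intro x
    rw [hN, dotProduct_sub, dotProduct_add, dotProduct_smul, dotProduct_smul, hwLw, hvLw,
      smul_eq_mul, smul_eq_mul]
    field_simp
    ring
  -- S = N^T L N
  set S : Matrix (Fin s) (Fin s) ℝ := Nᵀ * L * N with hSdef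
  have hSdot : ∀ x y, x ⬝ᵥ S *ᵥ y = (N *ᵥ x) ⬝ᵥ L *ᵥ (N *ᵥ y) := by
    intro x y
    rw [hSdef, ← mulVec_mulVec, ← mulVec_mulVec, dotProduct_mulVec x Nᵀ, vecMul_transpose]
  have hSsymm : S.IsSymm := by
    rw [Matrix.IsSymm, hSdef, transpose_mul, transpose_mul, transpose_transpose, hL.eq,
      Matrix.mul_assoc]
  have hSymmdotS : ∀ x y, x ⬝ᵥ S *ᵥ y = y ⬝ᵥ S *ᵥ x := hsymm_dot S hSsymm
  have hSv : S *ᵥ v = 0 := by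
    rw [hSdef, ← mulVec_mulVec, hNv, mulVec_zero]
  have hSw : S *ᵥ w = 0 := by
    rw [hSdef, ← mulVec_mulVec, hNw, mulVec_zero]
  have hSHerm : S.IsHermitian := by
    rwa [Matrix.IsHermitian, conjTranspose_eq_transpose_of_trivial]
  -- eigendecomposition
  set lam : Fin s → ℝ := hSHerm.eigenvalues with hlam
  set u : Fin s → (Fin s → ℝ) := fun i => ⇑(hSHerm.eigenvectorBasis i) with hu
  have hSu : ∀ i, S *ᵥ u i = lam i • u i := fun i => hSHerm.mulVec_eigenvectorBasis i
  have horth : ∀ i j, u i ⬝ᵥ u j = if i = j then 1 else 0 := by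
    intro i j
    have h := (orthonormal_iff_ite.mp hSHerm.eigenvectorBasis.orthonormal) i j
    simpa [hu, PiLp.inner_apply, dotProduct, RCLike.inner_apply, mul_comm] using h
  have hexpand : ∀ y : Fin s → ℝ, ∑ i, (u i ⬝ᵥ y) • u i = y := by
    intro y
    have h := hSHerm.eigenvectorBasis.sum_repr' (WithLp.toLp 2 y)
    have h2 := congrArg (fun z : EuclideanSpace ℝ (Fin s) => (z : Fin s → ℝ)) h
    simpa [hu, PiLp.inner_apply, dotProduct, mul_comm] using h2
  have hSmulsum : ∀ x, S *ᵥ x = ∑ i, (lam i * (u i ⬝ᵥ x)) • u i := by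
    intro x
    conv_lhs => rw [← hexpand x, myMulVec_sum]
    refine Finset.sum_congr rfl fun i _ => ?_
    rw [mulVec_smul, hSu i, smul_smul, mul_comm]
  have hSdotsum : ∀ x, x ⬝ᵥ S *ᵥ x = ∑ i, lam i * (u i ⬝ᵥ x)^2 := by
    intro x
    rw [hSmulsum, myDotProduct_sum]
    refine Finset.sum_congr rfl fun i _ => ?_
    rw [dotProduct_smul, smul_eq_mul, dotProduct_comm]
    ring
  have hker : ∀ (x : Fin s → ℝ), S *ᵥ x = 0 → ∀ i, lam i * (u i ⬝ᵥ x) = 0 := by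
    intro x hx i
    have h1 : lam i * (u i ⬝ᵥ x) = x ⬝ᵥ (lam i • u i) := by
      rw [dotProduct_smul, smul_eq_mul, dotProduct_comm]
    rw [h1, ← hSu i, hSymmdotS x (u i), hx, dotProduct_zero]
  -- T = |S|
  set T : Matrix (Fin s) (Fin s) ℝ := ∑ i, |lam i| • vecMulVec (u i) (u i) with hTdef
  have hT : ∀ x, T *ᵥ x = ∑ i, (|lam i| * (u i ⬝ᵥ x)) • u i := by
    intro x
    rw [hTdef, mySum_mulVec]
    refine Finset.sum_congr rfl fun i _ => ?_
    rw [smul_mulVec, myVecMulVec_mulVec, smul_smul]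
  have hTu : ∀ i, T *ᵥ u i = |lam i| • u i := by
    intro i
    rw [hT, Finset.sum_eq_single i]
    · rw [horth i i, if_pos rfl, mul_one]
    · intro j _ hji
      rw [horth j i, if_neg hji, mul_zero, zero_smul]
    · intro h; exact absurd (Finset.mem_univ i) h
  have hTdotsum : ∀ x, x ⬝ᵥ T *ᵥ x = ∑ i, |lam i| * (u i ⬝ᵥ x)^2 := by
    intro x
    rw [hT, myDotProduct_sum]
    refine Finset.sum_congr rfl fun i _ => ?_
    rw [dotProduct_smul, smul_eq_mul, dotProduct_comm]
    ring
  have hTker : ∀ x, S *ᵥ x = 0 → T *ᵥ x = 0 := by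
    intro x hx
    rw [hT]
    refine Finset.sum_eq_zero fun i _ => ?_
    rcases mul_eq_zero.mp (hker x hx i) with h | h
    · rw [h, abs_zero, zero_mul, zero_smul]
    · rw [h, mul_zero, zero_smul]
  have hTv : T *ᵥ v = 0 := hTker v hSv
  have hTw : T *ᵥ w = 0 := hTker w hSw
  have hTnonneg : ∀ x, 0 ≤ x ⬝ᵥ T *ᵥ x := by
    intro x
    rw [hTdotsum]
    exact Finset.sum_nonneg fun i _ => mul_nonneg (abs_nonneg _) (sq_nonneg _)
  -- bilinear expansion
  have hbilin : ∀ (x : Fin s → ℝ) (α β : ℝ),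
      (x - (α • v + β • w)) ⬝ᵥ L *ᵥ (x - (α • v + β • w))
        = x ⬝ᵥ L *ᵥ x - 2*α*(Lv ⬝ᵥ x) - 2*β*(Lw ⬝ᵥ x) + 2*α*β*b := by
    intro x α β
    have e1 : x ⬝ᵥ Lv = Lv ⬝ᵥ x := dotProduct_comm _ _
    have e2 : x ⬝ᵥ Lw = Lw ⬝ᵥ x := dotProduct_comm _ _
    have e3 : v ⬝ᵥ Lw = b := by rw [dotProduct_comm]; exact hvLw
    have e4 : w ⬝ᵥ Lv = b := by rw [dotProduct_comm]; exact hwLv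
    simp only [mulVec_sub, mulVec_add, mulVec_smul, dotProduct_sub, sub_dotProduct,
      dotProduct_add, add_dotProduct, dotProduct_smul, smul_dotProduct, smul_eq_mul,
      ← hLvdef, ← hLwdef]
    rw [hLvx x, hLwx x, hvCon, hwCon, e1, e2, e3, e4]
    ring
  have hSxx : ∀ x, x ⬝ᵥ S *ᵥ x = x ⬝ᵥ L *ᵥ x - 2*b⁻¹*(Lv ⬝ᵥ x)*(Lw ⬝ᵥ x) := by
    intro x
    rw [hSdot, hN x, hbilin x (b⁻¹ * (Lw ⬝ᵥ x)) (b⁻¹ * (Lv ⬝ᵥ x))]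
    field_simp
    ring
  have hLx : ∀ x, x ⬝ᵥ L *ᵥ x = 2*b⁻¹*(Lv ⬝ᵥ x)*(Lw ⬝ᵥ x) + x ⬝ᵥ S *ᵥ x := by
    intro x; rw [hSxx]; ring
  -- the candidate Q
  set Q : Matrix (Fin s) (Fin s) ℝ :=
    vecMulVec Lw Lw + (b^2)⁻¹ • vecMulVec Lv Lv + T with hQdef
  have hQmv : ∀ x, Q *ᵥ x = (Lw ⬝ᵥ x) • Lw + ((b^2)⁻¹ * (Lv ⬝ᵥ x)) • Lv + T *ᵥ x := by
    intro x
    rw [hQdef, add_mulVec, add_mulVec, myVecMulVec_mulVec, smul_mulVec,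
      myVecMulVec_mulVec, smul_smul]
  have hQx : ∀ x, x ⬝ᵥ Q *ᵥ x = (Lw ⬝ᵥ x)^2 + (b^2)⁻¹*(Lv ⬝ᵥ x)^2 + x ⬝ᵥ T *ᵥ x := by
    intro x
    rw [hQmv, dotProduct_add, dotProduct_add, dotProduct_smul, dotProduct_smul,
      smul_eq_mul, smul_eq_mul, dotProduct_comm x Lw, dotProduct_comm x Lv]
    ring
  -- domination
  have hdom : ∀ x, |x ⬝ᵥ L *ᵥ x| ≤ x ⬝ᵥ Q *ᵥ x := by
    intro x
    rw [hQx, hLx]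
    have h1 : |2*b⁻¹*(Lv ⬝ᵥ x)*(Lw ⬝ᵥ x)| ≤ (Lw ⬝ᵥ x)^2 + (b^2)⁻¹*(Lv ⬝ᵥ x)^2 := by
      set A := Lw ⬝ᵥ x with hA
      set C := b⁻¹ * (Lv ⬝ᵥ x) with hC
      have hre : 2*b⁻¹*(Lv ⬝ᵥ x)*A = 2*C*A := by rw [hC]; ring
      have hre2 : (b^2)⁻¹*(Lv ⬝ᵥ x)^2 = C^2 := by
        rw [hC]; field_simp
      rw [hre, hre2]
      refine abs_le.mpr ⟨?_, ?_⟩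
      · nlinarith [sq_nonneg (A + C)]
      · nlinarith [sq_nonneg (A - C)]
    have h2 : |x ⬝ᵥ S *ᵥ x| ≤ x ⬝ᵥ T *ᵥ x := by
      rw [hSdotsum, hTdotsum]
      refine (Finset.abs_sum_le_sum_abs _ _).trans (le_of_eq ?_)
      refine Finset.sum_congr rfl fun i _ => ?_
      rw [abs_mul, abs_sq]
    calc |2*b⁻¹*(Lv ⬝ᵥ x)*(Lw ⬝ᵥ x) + x ⬝ᵥ S *ᵥ x|
        ≤ |2*b⁻¹*(Lv ⬝ᵥ x)*(Lw ⬝ᵥ x)| + |x ⬝ᵥ S *ᵥ x| := abs_add_le _ _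
      _ ≤ ((Lw ⬝ᵥ x)^2 + (b^2)⁻¹*(Lv ⬝ᵥ x)^2) + x ⬝ᵥ T *ᵥ x := add_le_add h1 h2
      _ = (Lw ⬝ᵥ x)^2 + (b^2)⁻¹*(Lv ⬝ᵥ x)^2 + x ⬝ᵥ T *ᵥ x := by ring
  -- symmetry of Q
  have hTsymm : T.IsSymm := by
    rw [Matrix.IsSymm, hTdef]
    ext i j
    simp only [transpose_apply, Matrix.sum_apply, Matrix.smul_apply, vecMulVec_apply,
      smul_eq_mul]
    exact Finset.sum_congr rfl fun k _ => by ring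
  have hQsymm : Q.IsSymm := by
    rw [Matrix.IsSymm, hQdef]
    ext i j
    have hTji : T j i = T i j := by
      have h' := congrFun (congrFun hTsymm.eq j) i
      rw [transpose_apply] at h'
      exact h'.symm
    simp only [transpose_apply, Matrix.add_apply, Matrix.smul_apply, vecMulVec_apply,
      smul_eq_mul]
    rw [hTji]
    ring
  have hQHerm : Q.IsHermitian := by
    rwa [Matrix.IsHermitian, conjTranspose_eq_transpose_of_trivial]
  -- positive definiteness
  have hQposdef : Q.PosDef := by
    refine Matrix.PosDef.of_dotProduct_mulVec_pos hQHerm fun x hx => ?_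
    rw [star_trivial]
    have hnn : 0 ≤ x ⬝ᵥ Q *ᵥ x := by
      rw [hQx]
      have := hTnonneg x
      positivity
    rcases hnn.lt_or_eq with h | h
    · exact h
    exfalso
    apply hx
    -- all three parts vanish
    have h0 : (Lw ⬝ᵥ x)^2 + (b^2)⁻¹*(Lv ⬝ᵥ x)^2 + x ⬝ᵥ T *ᵥ x = 0 := by rw [← hQx, ← h]
    have hb2 : (0:ℝ) < (b^2)⁻¹ := by positivity
    have t1 : (0:ℝ) ≤ (Lw ⬝ᵥ x)^2 := sq_nonneg _
    have t2 : (0:ℝ) ≤ (b^2)⁻¹*(Lv ⬝ᵥ x)^2 := by positivity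
    have t3 := hTnonneg x
    have e1 : Lw ⬝ᵥ x = 0 := by
      have h' : (Lw ⬝ᵥ x)^2 = 0 := by linarith
      exact pow_eq_zero_iff two_ne_zero |>.mp h'
    have e2 : Lv ⬝ᵥ x = 0 := by
      have h' : (b^2)⁻¹*(Lv ⬝ᵥ x)^2 = 0 := by linarith
      have h'' : (Lv ⬝ᵥ x)^2 = 0 := by
        rcases mul_eq_zero.mp h' with h3 | h3
        · exact absurd h3 (inv_ne_zero (pow_ne_zero 2 hbl))
        · exact h3
      exact pow_eq_zero_iff two_ne_zero |>.mp h''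
    have e3 : x ⬝ᵥ T *ᵥ x = 0 := by
      rw [e1, e2] at h0
      simpa using h0
    have hcoe : ∀ i, lam i * (u i ⬝ᵥ x) = 0 := by
      intro i
      have hsum0 : ∑ i, |lam i| * (u i ⬝ᵥ x)^2 = 0 := by rw [← hTdotsum]; exact e3
      have hterm := (Finset.sum_eq_zero_iff_of_nonneg
        (fun i _ => mul_nonneg (abs_nonneg (lam i)) (sq_nonneg (u i ⬝ᵥ x)))).mp hsum0 i
        (Finset.mem_univ i)
      rcases mul_eq_zero.mp hterm with h' | h'
      · rw [abs_eq_zero.mp h', zero_mul]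
      · rw [pow_eq_zero_iff (two_ne_zero)] at h'
        rw [h', mul_zero]
    have hSx : S *ᵥ x = 0 := by
      rw [hSmulsum]
      exact Finset.sum_eq_zero fun i _ => by rw [hcoe i, zero_smul]
    have hNx : N *ᵥ x = x := by
      rw [hN, e1, e2]
      simp
    have hLxzero : L *ᵥ x = 0 := by
      have hall : ∀ y, y ⬝ᵥ (L *ᵥ x) = 0 := by
        intro y
        have hy : y = N *ᵥ y + ((b⁻¹ * (Lw ⬝ᵥ y)) • v + (b⁻¹ * (Lv ⬝ᵥ y)) • w) := by
          rw [hN]; abel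
        have hNyLx : (N *ᵥ y) ⬝ᵥ (L *ᵥ x) = 0 := by
          have : (N *ᵥ y) ⬝ᵥ L *ᵥ (N *ᵥ x) = y ⬝ᵥ S *ᵥ x := (hSdot y x).symm
          rw [hNx] at this
          rw [this, hSx, dotProduct_zero]
        conv_lhs => rw [hy]
        rw [add_dotProduct, add_dotProduct, smul_dotProduct, smul_dotProduct, hNyLx,
          smul_eq_mul, smul_eq_mul, hLvx x, hLwx x, e1, e2, mul_zero, mul_zero, zero_add,
          add_zero]
      have := hall (L *ᵥ x)
      rwa [dotProduct_self_eq_zero] at this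
    have hLinv := Matrix.nonsing_inv_mul L (isUnit_iff_ne_zero.mpr hLdet)
    calc x = (L⁻¹ * L) *ᵥ x := by rw [hLinv, one_mulVec]
      _ = L⁻¹ *ᵥ (L *ᵥ x) := by rw [← mulVec_mulVec]
      _ = 0 := by rw [hLxzero, mulVec_zero]
  -- values
  have hQwval : w ⬝ᵥ Q *ᵥ w = 1 := by
    rw [hQx, hwLw, hwLv, hTw, dotProduct_zero]
    field_simp
    norm_num
  have hQvval : v ⬝ᵥ Q *ᵥ v = b^2 := by
    rw [hQx, hvLw, hvLv, hTv, dotProduct_zero]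
    ring
  -- minimality
  have hmin : ∀ Q' : Matrix (Fin s) (Fin s) ℝ, Q'.PosDef →
      (∀ x : Fin s → ℝ, |x ⬝ᵥ L.mulVec x| ≤ x ⬝ᵥ Q'.mulVec x) →
      (∀ x : Fin s → ℝ, x ⬝ᵥ Q'.mulVec x ≤ x ⬝ᵥ Q.mulVec x) → Q' = Q := by
    intro Q' hQ'pd hdom' hle'
    set A : Matrix (Fin s) (Fin s) ℝ := Q - Q' with hAdef
    have hQ'symm : Q'.IsSymm := by
      have := hQ'pd.1
      rwa [Matrix.IsHermitian, conjTranspose_eq_transpose_of_trivial] at this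
    have hAsymm : A.IsSymm := by
      rw [Matrix.IsSymm, hAdef, transpose_sub, hQsymm.eq, hQ'symm.eq]
    have hAquad : ∀ x, x ⬝ᵥ A *ᵥ x = x ⬝ᵥ Q *ᵥ x - x ⬝ᵥ Q' *ᵥ x := by
      intro x
      rw [hAdef, sub_mulVec, dotProduct_sub]
    have hApsd : ∀ x, 0 ≤ x ⬝ᵥ A *ᵥ x := by
      intro x
      rw [hAquad]
      have := hle' x
      linarith
    have hAzero : ∀ x, |x ⬝ᵥ L *ᵥ x| = x ⬝ᵥ Q *ᵥ x → A *ᵥ x = 0 := by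
      intro x hx
      refine psd_mulVec_zero A hAsymm hApsd ?_
      have h1 := hdom' x
      have h2 := hle' x
      rw [hAquad]
      linarith [hx ▸ h1]
    -- equality vectors in the plane
    have hplane : ∀ ε : ℝ, ε = 1 ∨ ε = -1 → A *ᵥ (v + (ε*b) • w) = 0 := by
      intro ε hε
      apply hAzero
      set x := v + (ε*b) • w with hxdef
      have hLvxx : Lv ⬝ᵥ x = ε * b^2 := by
        rw [hxdef, dotProduct_add, dotProduct_smul, hvLv, hwLv, smul_eq_mul]
        ring
      have hLwxx : Lw ⬝ᵥ x = b := by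
        rw [hxdef, dotProduct_add, dotProduct_smul, hvLw, hwLw, smul_eq_mul]
        ring
      have hSxx0 : S *ᵥ x = 0 := by
        rw [hxdef, mulVec_add, mulVec_smul, hSv, hSw, smul_zero, add_zero]
      have hTxx0 : T *ᵥ x = 0 := by
        rw [hxdef, mulVec_add, mulVec_smul, hTv, hTw, smul_zero, add_zero]
      have hQval : x ⬝ᵥ Q *ᵥ x = 2*b^2 := by
        rw [hQx, hLvxx, hLwxx, hTxx0, dotProduct_zero]
        have hε2 : ε^2 = 1 := by rcases hε with h | h <;> rw [h] <;> ring
        field_simp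
        nlinarith [hε2]
      have hLval : x ⬝ᵥ L *ᵥ x = ε * (2*b^2) := by
        rw [hLx, hLvxx, hLwxx, hSxx0, dotProduct_zero]
        field_simp
        ring
      rw [hQval, hLval, abs_mul]
      have hb2 : |2*b^2| = 2*b^2 := abs_of_nonneg (by positivity)
      have hεabs : |ε| = 1 := by rcases hε with h | h <;> rw [h] <;> simp
      rw [hb2, hεabs, one_mul]
    have hA1 := hplane 1 (Or.inl rfl)
    have hA2 := hplane (-1) (Or.inr rfl)
    have hAv : A *ᵥ v = 0 := by
      have hsum : (v + (1*b) • w) + (v + ((-1)*b) • w) = v + v := by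
        rw [one_mul, neg_one_mul, neg_smul]
        abel
      have : A *ᵥ (v + v) = 0 := by
        rw [← hsum, mulVec_add, hA1, hA2, add_zero]
      rw [mulVec_add, ← two_smul ℝ] at this
      exact (smul_eq_zero.mp this).resolve_left two_ne_zero
    have hAw : A *ᵥ w = 0 := by
      have hsum : (v + (1*b) • w) - (v + ((-1)*b) • w) = (2*b) • w := by
        rw [one_mul, neg_one_mul, neg_smul]
        have : (2*b) • w = b • w + b • w := by rw [← add_smul]; ring_nf
        rw [this]
        abel
      have h0 : A *ᵥ ((2*b) • w) = 0 := by
        rw [← hsum, mulVec_sub, hA1, hA2, sub_zero]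
      rw [mulVec_smul] at h0
      have h2b : (2*b) ≠ 0 := by
        simp [hbl]
      exact (smul_eq_zero.mp h0).resolve_left h2b
    -- equality vectors from eigenvectors
    have hAu : ∀ i, A *ᵥ u i = 0 := by
      intro i
      set p : Fin s → ℝ := (b⁻¹ * (Lw ⬝ᵥ u i)) • v + (b⁻¹ * (Lv ⬝ᵥ u i)) • w with hpdef
      have hxi : N *ᵥ u i = u i - p := by rw [hN, hpdef]
      set x := N *ᵥ u i with hxdef
      have hSp : S *ᵥ p = 0 := by
        rw [hpdef, mulVec_add, mulVec_smul, mulVec_smul, hSv, hSw, smul_zero, smul_zero,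
          add_zero]
      have hTp : T *ᵥ p = 0 := by
        rw [hpdef, mulVec_add, mulVec_smul, mulVec_smul, hTv, hTw, smul_zero, smul_zero,
          add_zero]
      have hpu : lam i * (p ⬝ᵥ u i) = 0 := by
        have h1 : lam i * (p ⬝ᵥ u i) = p ⬝ᵥ (lam i • u i) := by
          rw [dotProduct_smul, smul_eq_mul]
        rw [h1, ← hSu i, hSymmdotS p (u i), hSp, dotProduct_zero]
      have huu : u i ⬝ᵥ u i = 1 := by rw [horth i i, if_pos rfl]
      have hSxval : x ⬝ᵥ S *ᵥ x = lam i := by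
        rw [hxi, mulVec_sub, hSu i, hSp, sub_zero]
        simp only [sub_dotProduct, dotProduct_smul, smul_eq_mul, huu, mul_one]
        linarith [hpu]
      have hpu' : |lam i| * (p ⬝ᵥ u i) = 0 := by
        rcases mul_eq_zero.mp hpu with h' | h'
        · rw [h', abs_zero, zero_mul]
        · rw [h', mul_zero]
      have hTxval : x ⬝ᵥ T *ᵥ x = |lam i| := by
        rw [hxi, mulVec_sub, hTu i, hTp, sub_zero]
        simp only [sub_dotProduct, dotProduct_smul, smul_eq_mul, huu, mul_one]
        linarith [hpu']
      have heq : |x ⬝ᵥ L *ᵥ x| = x ⬝ᵥ Q *ᵥ x := by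
        have hv0 : Lv ⬝ᵥ x = 0 := by rw [hxdef]; exact hNorthv (u i)
        have hw0 : Lw ⬝ᵥ x = 0 := by rw [hxdef]; exact hNorthw (u i)
        rw [hQx, hLx, hv0, hw0, hSxval, hTxval]
        norm_num
      have hAx : A *ᵥ x = 0 := hAzero x heq
      have hAp : A *ᵥ p = 0 := by
        rw [hpdef, mulVec_add, mulVec_smul, mulVec_smul, hAv, hAw, smul_zero, smul_zero,
          add_zero]
      have : A *ᵥ (u i) = A *ᵥ x + A *ᵥ p := by
        rw [← mulVec_add, hxi]
        congr 1
        rw [sub_add_cancel]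
      rw [this, hAx, hAp, add_zero]
    -- A kills everything
    have hAall : ∀ y, A *ᵥ y = 0 := by
      intro y
      conv_lhs => rw [← hexpand y, myMulVec_sum]
      refine Finset.sum_eq_zero fun i _ => ?_
      rw [mulVec_smul, hAu i, smul_zero]
    have hA0 : A = 0 := by
      ext i j
      have := congrFun (hAall (Pi.single j 1)) i
      rw [mulVec_single] at this
      simpa using this
    have := sub_eq_zero.mp (hAdef ▸ hA0)
    exact this.symm
  exact ⟨Q, ⟨hQposdef, hdom, hmin⟩, hQwval, hQvval⟩


lemma key_lower {s : ℕ} (L : Matrix (Fin s) (Fin s) ℝ) (hL : L.IsSymm)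
    (v w : Fin s → ℝ) (hv : v ≠ 0) (hw : w ≠ 0)
    (hvCon : v ⬝ᵥ L.mulVec v = 0) (hwCon : w ⬝ᵥ L.mulVec w = 0)
    (Q : Matrix (Fin s) (Fin s) ℝ) (hQpd : Q.PosDef)
    (hdom : ∀ x, |x ⬝ᵥ L.mulVec x| ≤ x ⬝ᵥ Q.mulVec x) :
    (v ⬝ᵥ L.mulVec w)^2 ≤ (v ⬝ᵥ Q.mulVec v) * (w ⬝ᵥ Q.mulVec w) := by
  set b := v ⬝ᵥ L *ᵥ w with hb
  set a := v ⬝ᵥ Q *ᵥ v with hadef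
  set c := w ⬝ᵥ Q *ᵥ w with hcdef
  have ha : 0 < a := by
    have := hQpd.dotProduct_mulVec_pos hv
    rwa [star_trivial] at this
  have hc : 0 < c := by
    have := hQpd.dotProduct_mulVec_pos hw
    rwa [star_trivial] at this
  have hQsymm : Q.IsSymm := by
    have := hQpd.1
    rwa [Matrix.IsHermitian, conjTranspose_eq_transpose_of_trivial] at this
  set q := v ⬝ᵥ Q *ᵥ w with hq
  have hwv : w ⬝ᵥ L *ᵥ v = b := hsymm_dot L hL w v
  have hqwv : w ⬝ᵥ Q *ᵥ v = q := hsymm_dot Q hQsymm w v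
  set t := Real.sqrt c / Real.sqrt a with htdef
  have ht2 : t^2 * a = c := by
    rw [htdef, div_pow, Real.sq_sqrt hc.le, Real.sq_sqrt ha.le,
      div_mul_cancel₀ _ (ne_of_gt ha)]
  have hLp : (t • v + w) ⬝ᵥ L *ᵥ (t • v + w) = 2*t*b := by
    simp only [mulVec_add, mulVec_smul, dotProduct_add, add_dotProduct, dotProduct_smul,
      smul_dotProduct, smul_eq_mul]
    rw [hvCon, hwCon, hwv, ← hb]
    ring
  have hLm : (t • v - w) ⬝ᵥ L *ᵥ (t • v - w) = -(2*t*b) := by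
    simp only [mulVec_sub, mulVec_smul, dotProduct_sub, sub_dotProduct, dotProduct_smul,
      smul_dotProduct, smul_eq_mul]
    rw [hvCon, hwCon, hwv, ← hb]
    ring
  have hQp : (t • v + w) ⬝ᵥ Q *ᵥ (t • v + w) = t^2*a + 2*t*q + c := by
    simp only [mulVec_add, mulVec_smul, dotProduct_add, add_dotProduct, dotProduct_smul,
      smul_dotProduct, smul_eq_mul]
    rw [← hadef, ← hcdef, hqwv, ← hq]
    ring
  have hQm : (t • v - w) ⬝ᵥ Q *ᵥ (t • v - w) = t^2*a - 2*t*q + c := by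
    simp only [mulVec_sub, mulVec_smul, dotProduct_sub, sub_dotProduct, dotProduct_smul,
      smul_dotProduct, smul_eq_mul]
    rw [← hadef, ← hcdef, hqwv, ← hq]
    ring
  have h1 := hdom (t • v + w)
  have h2 := hdom (t • v - w)
  rw [hLp, hQp] at h1
  rw [hLm, hQm, abs_neg] at h2
  have habs : |2*t*b| ≤ 2*c := by
    have := abs_nonneg (2*t*b)
    linarith [h1, h2, ht2]
  have htb : |t*b| ≤ c := by
    have hre : 2*t*b = 2*(t*b) := by ring
    rw [hre, abs_mul, abs_two] at habs
    linarith
  have htb' := abs_le.mp htb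
  have h6 : (t*b)^2 ≤ c^2 := sq_le_sq' htb'.1 htb'.2
  have h7 : c * b^2 ≤ c^2 * a :=
    calc c * b^2 = (t^2*a) * b^2 := by rw [ht2]
      _ = (t*b)^2 * a := by ring
      _ ≤ c^2 * a := mul_le_mul_of_nonneg_right h6 ha.le
  nlinarith [h7, hc]

/-- if `v, w ∈ Con_L` with `b_L(v,w) ≠ 0`, the oriented distance between the
horoballs `Hb_v` and `Hb_w` in `𝒫_s(L)` is `2√2 ln |b_L(v,w)|`. -/
theorem stmt_12 (s : ℕ) (L : Matrix (Fin s) (Fin s) ℝ) (hL : L.IsSymm) (hLdet : L.det ≠ 0)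
    (v w : Fin s → ℝ) (hv : v ≠ 0) (hw : w ≠ 0)
    (hvCon : v ⬝ᵥ L.mulVec v = 0) (hwCon : w ⬝ᵥ L.mulVec w = 0)
    (hbl : v ⬝ᵥ L.mulVec w ≠ 0) :
    odistHb L v w = 2 * Real.sqrt 2 * Real.log |v ⬝ᵥ L.mulVec w| := by
  set b := v ⬝ᵥ L.mulVec w with hb
  obtain ⟨Q₀, hQ₀mem, hQ₀w, hQ₀v⟩ := exists_minimal L hL hLdet v w hvCon hwCon hbl
  set 𝒮 := ((fun Q => Real.sqrt 2 * Real.log (quadEval Q v)) ''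
    {Q | Q ∈ PsL L ∧ Real.sqrt 2 * Real.log (quadEval Q w) ≤ 0}) with hSdef
  have hQ₀PsL : Q₀ ∈ PsL L := hQ₀mem
  have hmem : (2 : ℝ) * Real.sqrt 2 * Real.log |b| ∈ 𝒮 := by
    refine ⟨Q₀, ⟨hQ₀PsL, ?_⟩, ?_⟩
    · simp only [quadEval]
      rw [hQ₀w, Real.log_one, mul_zero]
    · simp only [quadEval]
      rw [hQ₀v, ← sq_abs, Real.log_pow]
      push_cast
      ring
  have hlb : ∀ r ∈ 𝒮, 2 * Real.sqrt 2 * Real.log |b| ≤ r := by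
    rintro r ⟨Q, ⟨hQmem, hQw⟩, rfl⟩
    obtain ⟨hQpd, hQdom, -⟩ := hQmem
    have ha : 0 < quadEval Q v := by
      have h' := hQpd.dotProduct_mulVec_pos hv
      rw [star_trivial] at h'
      exact h'
    have hc : 0 < quadEval Q w := by
      have h' := hQpd.dotProduct_mulVec_pos hw
      rw [star_trivial] at h'
      exact h'
    have hs2 : (0:ℝ) < Real.sqrt 2 := by positivity
    have hlog : Real.log (quadEval Q w) ≤ 0 := by
      by_contra h'
      push_neg at h'
      have := mul_pos hs2 h'
      linarith
    have hcle : quadEval Q w ≤ 1 := (Real.log_nonpos_iff hc.le).mp hlog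
    have hb2 : b^2 ≤ quadEval Q v * quadEval Q w := by
      exact key_lower L hL v w hv hw hvCon hwCon Q hQpd hQdom
    have hble : b^2 ≤ quadEval Q v := by nlinarith [hb2, ha, hcle]
    have hlog2 : Real.log (b^2) ≤ Real.log (quadEval Q v) := by
      have hbpos : (0:ℝ) < b^2 := by positivity
      exact (Real.log_le_log_iff hbpos ha).mpr hble
    have hid : Real.log (b^2) = 2 * Real.log |b| := by
      rw [← sq_abs, Real.log_pow]
      push_cast
      ring
    calc 2 * Real.sqrt 2 * Real.log |b| = Real.sqrt 2 * Real.log (b^2) := by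
          rw [hid]; ring
      _ ≤ Real.sqrt 2 * Real.log (quadEval Q v) :=
          mul_le_mul_of_nonneg_left hlog2 hs2.le
  have hbdd : BddBelow 𝒮 := ⟨2 * Real.sqrt 2 * Real.log |b|, fun r hr => hlb r hr⟩
  rw [odistHb, ← hSdef]
  exact le_antisymm (csInf_le hbdd hmem) (le_csInf ⟨_, hmem⟩ hlb)
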